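/- Let x be a 1-form on a finite connected graph G. For every x-minimal spanning tree T of G, the 1-form m(·,T) is a minimal form in F(x). -/

import Mathlib

/-!
If `θ` is a potential of `x` along the spanning tree `T`, then `m(·,T) = x - dθ`: it has the
same flux as `x` through every closed walk, and it is supported exactly on the non-tree edges
whose fundamental cycle carries nonzero flux, so its support has size `β_T`. Conversely, for
`b ∈ F(x)` grow a maximal forest inside the zero set of `b` into a spanning tree `T'`. A non-tree
edge on which `b` vanishes closes a cycle inside that zero set, so its fundamental cycle has zero
`b`-flux, which is its `x`-flux. Hence `β_{T'} ≤ |supp b|`, and the minimality of `T` concludes.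
-/

open Classical Finset

/-- A (multi)graph given by oriented edges: each oriented edge `e` has a starting
vertex `head e` and an ending vertex `tail e`, and a reversal involution. -/
structure OGraph (V A : Type) where
  head : A → V
  tail : A → V
  rev : A → A
  rev_rev : ∀ e, rev (rev e) = e
  rev_ne : ∀ e, rev e ≠ e
  head_rev : ∀ e, head (rev e) = tail e

namespace OGraph

variable {V A : Type}

/-- `G.IsWalkFrom l u v` : the list of oriented edges `l` is a walk from `u` to `v`. -/
def IsWalkFrom (G : OGraph V A) : List A → V → V → Prop
  | [], u, v => u = v
  | e :: l, u, v => G.head e = u ∧ G.IsWalkFrom l (G.tail e) v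

def Connected (G : OGraph V A) : Prop := ∀ u v : V, ∃ l : List A, G.IsWalkFrom l u v

/-- A (vector-valued) 1-form on the graph. -/
def IsOneForm (G : OGraph V A) {d : ℕ} (b : A → Fin d → ℝ) : Prop :=
  ∀ e, b (G.rev e) = - b e

/-- `G.InF x b` : `b` is a 1-form with the same flux as `x` through every cycle
(equivalently, every closed walk); this is the set `F(x)`. -/
def InF (G : OGraph V A) {d : ℕ} (x b : A → Fin d → ℝ) : Prop :=
  G.IsOneForm b ∧ ∀ (u : V) (l : List A), G.IsWalkFrom l u u →
    (l.map b).sum = (l.map x).sum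

/-- A closed trail: a nonempty closed walk repeating no (unoriented) edge. -/
def IsClosedTrail (G : OGraph V A) (l : List A) (u : V) : Prop :=
  G.IsWalkFrom l u u ∧ l ≠ [] ∧ l.Pairwise (fun e f => e ≠ f ∧ e ≠ G.rev f)

/-- A spanning tree, as a set of oriented edges closed under reversal:
connected, spanning, and acyclic. -/
def IsSpanningTree (G : OGraph V A) (T : Set A) : Prop :=
  (∀ e ∈ T, G.rev e ∈ T) ∧
  (∀ u v : V, ∃ l : List A, (∀ e ∈ l, e ∈ T) ∧ G.IsWalkFrom l u v) ∧
  ¬ ∃ (l : List A) (u : V), (∀ e ∈ l, e ∈ T) ∧ G.IsClosedTrail l u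

/-- `c` is a fundamental cycle of the edge `e ∉ T` with respect to the spanning
tree `T` : a cycle through `e` all of whose other edges lie in `T`. -/
def FundCycle (G : OGraph V A) (T : Set A) (e : A) (c : List A) : Prop :=
  (∃ u, G.IsClosedTrail c u) ∧ e ∈ c ∧ ∀ f ∈ c, f ≠ e → f ∈ T

/-- `S` chooses one orientation of each edge not in `T`. -/
def IsOrientation (G : OGraph V A) (T S : Set A) : Prop :=
  (∀ e ∈ S, e ∉ T) ∧ ∀ e, e ∉ T → (e ∈ S ↔ G.rev e ∉ S)

/-- The 1-form `m(·,T)` : zero on the tree and equal to the flux of `x` through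
the fundamental cycle `c e` on each non-tree edge `e` (oriented via `S`). -/
noncomputable def mForm (G : OGraph V A) {d : ℕ} (x : A → Fin d → ℝ) (S : Set A)
    (c : A → List A) : A → Fin d → ℝ :=
  fun e => if e ∈ S then ((c e).map x).sum
    else if G.rev e ∈ S then - (((c (G.rev e)).map x).sum) else 0

/-- The number of oriented edges in the support of a 1-form. -/
noncomputable def suppCard [Fintype A] {d : ℕ} (b : A → Fin d → ℝ) : ℕ :=
  (Finset.univ.filter (fun e => b e ≠ 0)).card

/-- Twice the number `β_T` of fundamental cycles of `T` with nonzero `x`-flux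
(each non-tree unoriented edge is counted in both orientations). -/
noncomputable def badCount [Fintype A] {d : ℕ} (x : A → Fin d → ℝ) (T : Set A)
    (c : A → List A) : ℕ :=
  (Finset.univ.filter (fun e => e ∉ T ∧ ((c e).map x).sum ≠ 0)).card

/-- An `x`-minimal spanning tree: the number of fundamental cycles with nonzero
`x`-flux is minimal among all spanning trees. -/
def IsMinTree [Fintype A] (G : OGraph V A) {d : ℕ} (x : A → Fin d → ℝ) (T : Set A) : Prop :=
  G.IsSpanningTree T ∧ ∃ c : A → List A, (∀ e, e ∉ T → G.FundCycle T e (c e)) ∧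
    ∀ (T' : Set A) (c' : A → List A), G.IsSpanningTree T' →
      (∀ e, e ∉ T' → G.FundCycle T' e (c' e)) → badCount x T c ≤ badCount x T' c'

end OGraph

theorem List.exists_eq_append_of_not_pairwise {α : Type*} {R : α → α → Prop} {l : List α}
    (h : ¬ l.Pairwise R) : ∃ p a q b s, l = p ++ a :: (q ++ b :: s) ∧ ¬ R a b := by
  induction l with
  | nil => exact absurd List.Pairwise.nil h
  | cons x t ih =>
    rw [List.pairwise_cons, not_and_or, not_forall] at h
    rcases h with ⟨y, hy⟩ | ht
    · obtain ⟨hyt, hxy⟩ := Classical.not_imp.1 hy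
      obtain ⟨q, s, rfl⟩ := List.append_of_mem hyt
      exact ⟨[], x, q, y, s, rfl, hxy⟩
    · obtain ⟨p, a, q, b, s, rfl, hab⟩ := ih ht
      exact ⟨x :: p, a, q, b, s, rfl, hab⟩

namespace OGraph

variable {V A : Type} {d : ℕ} {G : OGraph V A}

def RevClosed (G : OGraph V A) (P : Set A) : Prop := ∀ e ∈ P, G.rev e ∈ P

def Spans (G : OGraph V A) (P : Set A) : Prop :=
  ∀ u v : V, ∃ l : List A, (∀ e ∈ l, e ∈ P) ∧ G.IsWalkFrom l u v

def IsAcyclic (G : OGraph V A) (P : Set A) : Prop :=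
  ¬ ∃ (l : List A) (u : V), (∀ e ∈ l, e ∈ P) ∧ G.IsClosedTrail l u

def defect (G : OGraph V A) (y : A → Fin d → ℝ) (θ : V → Fin d → ℝ) (e : A) : Fin d → ℝ :=
  y e - (θ (G.tail e) - θ (G.head e))

theorem tail_rev (G : OGraph V A) (e : A) : G.tail (G.rev e) = G.head e := by
  simpa only [G.rev_rev] using (G.head_rev (G.rev e)).symm

theorem isWalkFrom_append {l₁ l₂ : List A} {u v : V} :
    G.IsWalkFrom (l₁ ++ l₂) u v ↔ ∃ w, G.IsWalkFrom l₁ u w ∧ G.IsWalkFrom l₂ w v := by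
  induction l₁ generalizing u with
  | nil => simp [IsWalkFrom]
  | cons e t ih => simp only [List.cons_append, IsWalkFrom, ih, and_assoc, exists_and_left]

theorem IsWalkFrom.append {l₁ l₂ : List A} {u w v : V} (h₁ : G.IsWalkFrom l₁ u w)
    (h₂ : G.IsWalkFrom l₂ w v) : G.IsWalkFrom (l₁ ++ l₂) u v :=
  isWalkFrom_append.2 ⟨w, h₁, h₂⟩

theorem IsWalkFrom.reverse {l : List A} {u v : V} (h : G.IsWalkFrom l u v) :
    G.IsWalkFrom (l.reverse.map G.rev) v u := by
  induction l generalizing u with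
  | nil => exact h.symm
  | cons e t ih =>
    obtain ⟨rfl, ht⟩ := h
    rw [List.reverse_cons, List.map_append]
    exact (ih ht).append ⟨G.head_rev e, G.tail_rev e⟩

theorem IsClosedTrail.reverse {l : List A} {u : V} (h : G.IsClosedTrail l u) :
    G.IsClosedTrail (l.reverse.map G.rev) u := by
  obtain ⟨hw, hne, hp⟩ := h
  refine ⟨hw.reverse, by simpa using hne, ?_⟩
  rw [List.pairwise_map, List.pairwise_reverse]
  exact hp.imp fun {a b} hab => ⟨fun h => hab.1 (by rw [← G.rev_rev a, ← h, G.rev_rev]),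
    fun h => hab.2 (by rw [h, G.rev_rev])⟩

theorem IsClosedTrail.rev_notMem {l : List A} {u : V} (h : G.IsClosedTrail l u) {e : A}
    (he : e ∈ l) : G.rev e ∉ l := by
  have : Std.Symm fun e f => e ≠ f ∧ e ≠ G.rev f :=
    ⟨fun a b h => ⟨h.1.symm, fun hb => h.2 (by rw [hb, G.rev_rev])⟩⟩
  exact fun hre => (h.2.2.forall he hre (G.rev_ne e).symm).2 (G.rev_rev e).symm

theorem isAcyclic_empty : G.IsAcyclic ∅ := by
  rintro ⟨l, u, hl, -, hne, -⟩
  obtain ⟨a, ha⟩ := List.exists_mem_of_ne_nil l hne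
  exact hl a ha

theorem IsAcyclic.sum_map_eq_zero {P : Set A} (hP : G.IsAcyclic P) {y : A → Fin d → ℝ}
    (hy : G.IsOneForm y) {l : List A} {u : V} (hlP : ∀ e ∈ l, e ∈ P)
    (hw : G.IsWalkFrom l u u) : (l.map y).sum = 0 := by
  induction hn : l.length using Nat.strong_induction_on generalizing l u with
  | _ n ih =>
  subst hn
  by_cases htrail : l.Pairwise fun e f => e ≠ f ∧ e ≠ G.rev f
  · rcases eq_or_ne l [] with rfl | hne
    · rfl
    · exact absurd ⟨l, u, hlP, hw, hne, htrail⟩ hP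
  -- a repeated edge splits the walk into two shorter closed walks
  obtain ⟨p, a, q, b, s, rfl, hab⟩ := List.exists_eq_append_of_not_pairwise htrail
  simp only [isWalkFrom_append, IsWalkFrom] at hw
  obtain ⟨_, hp, rfl, _, hq, rfl, hs⟩ := hw
  have hshorter : ∀ l' : List A, l'.length < (p ++ a :: (q ++ b :: s)).length →
      l' ⊆ p ++ a :: (q ++ b :: s) → ∀ {v}, G.IsWalkFrom l' v v → (l'.map y).sum = 0 :=
    fun l' hlen hsub _ hw' => ih _ hlen (fun e he => hlP e (hsub he)) hw' rfl
  simp only [List.map_append, List.map_cons, List.sum_append, List.sum_cons]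
  rw [not_and_or, not_not, not_not] at hab
  rcases hab with rfl | rfl
  · have h₁ := hshorter (a :: q) (by simp; omega) (by intro e; simp; tauto) ⟨rfl, hq⟩
    have h₂ := hshorter (p ++ a :: s) (by simp) (by intro e; simp; tauto)
      (hp.append ⟨rfl, hs⟩)
    simp only [List.map_append, List.map_cons, List.sum_append, List.sum_cons] at h₁ h₂
    linear_combination h₁ + h₂
  · rw [G.head_rev] at hp
    rw [G.tail_rev] at hq
    have h₁ := hshorter q (by simp; omega) (by intro e; simp; tauto) hq
    have h₂ := hshorter (p ++ s) (by simp; omega) (by intro e; simp; tauto) (hp.append hs)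
    simp only [List.map_append, List.sum_append] at h₂
    linear_combination h₁ + h₂ + hy b

theorem sum_map_eq_sub_add_defect (y : A → Fin d → ℝ) (θ : V → Fin d → ℝ) {l : List A} {u v : V}
    (hw : G.IsWalkFrom l u v) : (l.map y).sum = θ v - θ u + (l.map (G.defect y θ)).sum := by
  induction l generalizing u with
  | nil =>
    cases (hw : u = v)
    simp
  | cons e t ih =>
    obtain ⟨rfl, ht⟩ := hw
    simp only [List.map_cons, List.sum_cons, ih ht, defect]
    abel

theorem sum_map_eq_sub_of_defect_eq_zero {T : Set A} {y : A → Fin d → ℝ} {θ : V → Fin d → ℝ}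
    (hθ : ∀ e ∈ T, G.defect y θ e = 0) {l : List A} {u v : V} (hlT : ∀ e ∈ l, e ∈ T)
    (hw : G.IsWalkFrom l u v) : (l.map y).sum = θ v - θ u := by
  rw [sum_map_eq_sub_add_defect y θ hw, List.sum_eq_zero, add_zero]
  simp only [List.mem_map]
  rintro _ ⟨e, he, rfl⟩
  exact hθ e (hlT e he)

theorem isOneForm_defect {y : A → Fin d → ℝ} (hy : G.IsOneForm y) (θ : V → Fin d → ℝ) :
    G.IsOneForm (G.defect y θ) := by
  intro e
  simp only [defect, hy e, G.head_rev, G.tail_rev]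
  abel

theorem inF_defect {y : A → Fin d → ℝ} (hy : G.IsOneForm y) (θ : V → Fin d → ℝ) :
    G.InF y (G.defect y θ) :=
  ⟨isOneForm_defect hy θ, fun _ _ hw => by
    rw [sum_map_eq_sub_add_defect y θ hw, sub_self, zero_add]⟩

theorem exists_defect_eq_zero {T : Set A} (hspan : G.Spans T) (hacyc : G.IsAcyclic T)
    {y : A → Fin d → ℝ} (hy : G.IsOneForm y) :
    ∃ θ : V → Fin d → ℝ, ∀ e ∈ T, G.defect y θ e = 0 := by
  rcases isEmpty_or_nonempty V with _ | ⟨⟨r⟩⟩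
  · exact ⟨0, fun e => isEmptyElim (G.head e)⟩
  choose out houtT hout using hspan r
  choose back hbackT hback using fun v => hspan v r
  refine ⟨fun v => ((out v).map y).sum, fun e he => ?_⟩
  -- the two closed walks `r → head e → tail e → r` and `r → tail e → r`
  have h₁ := hacyc.sum_map_eq_zero hy (l := out (G.head e) ++ e :: back (G.tail e))
    (by simp only [List.mem_append, List.mem_cons]; grind) ((hout _).append ⟨rfl, hback _⟩)
  have h₂ := hacyc.sum_map_eq_zero hy (l := out (G.tail e) ++ back (G.tail e))
    (by simp only [List.mem_append]; grind) ((hout _).append (hback _))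
  simp only [List.map_append, List.map_cons, List.sum_append, List.sum_cons] at h₁ h₂
  simp only [defect]
  linear_combination h₁ - h₂

theorem FundCycle.sum_map_eq_defect {T : Set A} {e : A} {c : List A} (hc : G.FundCycle T e c)
    {y : A → Fin d → ℝ} {θ : V → Fin d → ℝ} (hθ : ∀ f ∈ T, G.defect y θ f = 0) :
    (c.map y).sum = G.defect y θ e := by
  obtain ⟨⟨u, hw, -, htrail⟩, hec, hcT⟩ := hc
  rw [sum_map_eq_sub_add_defect y θ hw, sub_self, zero_add,
    ← List.sum_toFinset _ (htrail.imp And.left)]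
  exact Finset.sum_eq_single_of_mem e (List.mem_toFinset.2 hec)
    fun f hf hfe => hθ f (hcT f (List.mem_toFinset.1 hf) hfe)

theorem FundCycle.exists_walk {P : Set A} {e : A} {c : List A} (hc : G.FundCycle P e c) :
    ∃ w, (∀ f ∈ w, f ∈ P) ∧ G.IsWalkFrom w (G.tail e) (G.head e) := by
  obtain ⟨⟨u, hw, -, htrail⟩, hec, hcP⟩ := hc
  obtain ⟨p, q, rfl⟩ := List.append_of_mem hec
  have he : e ∉ p ++ q := (List.nodup_cons.1 (List.nodup_middle.1 (htrail.imp And.left))).1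
  obtain ⟨_, hp, rfl, hq⟩ := isWalkFrom_append.1 hw
  refine ⟨q ++ p, fun f hf => hcP f ?_ ?_, hq.append hp⟩
  · simp only [List.mem_append, List.mem_cons] at hf ⊢
    tauto
  · rintro rfl
    simp only [List.mem_append] at he hf
    tauto

theorem exists_fundCycle_of_not_isAcyclic {P : Set A} (hrev : G.RevClosed P) (hP : G.IsAcyclic P)
    {e : A} (h : ¬ G.IsAcyclic (insert e (insert (G.rev e) P))) : ∃ c, G.FundCycle P e c := by
  obtain ⟨l, u, hl, ht⟩ := not_not.1 h
  simp only [Set.mem_insert_iff] at hl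
  have hfund : ∀ l, (∀ f ∈ l, f = e ∨ f = G.rev e ∨ f ∈ P) → G.IsClosedTrail l u → e ∈ l →
      G.FundCycle P e l := fun l hl ht he =>
    ⟨⟨u, ht⟩, he, fun f hf hfe =>
      ((hl f hf).resolve_left hfe).resolve_left fun h => ht.rev_notMem he (h ▸ hf)⟩
  by_cases he : e ∈ l
  · exact ⟨l, hfund l hl ht he⟩
  by_cases hre : G.rev e ∈ l
  · refine ⟨_, hfund _ ?_ ht.reverse
      (List.mem_map.2 ⟨G.rev e, List.mem_reverse.2 hre, G.rev_rev e⟩)⟩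
    simp only [List.mem_map, List.mem_reverse]
    rintro _ ⟨f, hf, rfl⟩
    rcases hl f hf with rfl | rfl | hfP
    · exact Or.inr (Or.inl rfl)
    · exact Or.inl (G.rev_rev _)
    · exact Or.inr (Or.inr (hrev f hfP))
  · refine absurd ⟨l, u, fun f hf => ?_, ht⟩ hP
    rcases hl f hf with rfl | rfl | hfP
    · exact absurd hf he
    · exact absurd hf hre
    · exact hfP

theorem exists_maximal_isAcyclic [Finite A] {P Q : Set A} (hPQ : P ⊆ Q) (hQ : G.RevClosed Q)
    (hPrev : G.RevClosed P) (hP : G.IsAcyclic P) :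
    ∃ P', P ⊆ P' ∧ P' ⊆ Q ∧ G.RevClosed P' ∧ G.IsAcyclic P' ∧
      ∀ e ∈ Q, e ∉ P' → ∃ c, G.FundCycle P' e c := by
  obtain ⟨P', hmax⟩ := (Set.toFinite {R : Set A | P ⊆ R ∧ R ⊆ Q ∧ G.RevClosed R ∧ G.IsAcyclic R}
    ).exists_maximal ⟨P, subset_rfl, hPQ, hPrev, hP⟩
  obtain ⟨hPP', hP'Q, hrev, hacyc⟩ := hmax.prop
  refine ⟨P', hPP', hP'Q, hrev, hacyc, fun e heQ he =>
    exists_fundCycle_of_not_isAcyclic hrev hacyc fun h => he (hmax.2 ⟨?_, ?_, ?_, h⟩ ?_ ?_)⟩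
  · exact hPP'.trans ((Set.subset_insert _ _).trans (Set.subset_insert _ _))
  · exact Set.insert_subset heQ (Set.insert_subset (hQ e heQ) hP'Q)
  · simp only [RevClosed, Set.mem_insert_iff]
    rintro f (rfl | rfl | hf)
    · exact Or.inr (Or.inl rfl)
    · exact Or.inl (G.rev_rev _)
    · exact Or.inr (Or.inr (hrev f hf))
  · exact (Set.subset_insert _ _).trans (Set.subset_insert _ _)
  · exact Set.mem_insert e _

theorem spans_of_forall_fundCycle {T : Set A} (hG : G.Connected) (hrev : G.RevClosed T)
    (h : ∀ e ∉ T, ∃ c, G.FundCycle T e c) : G.Spans T := by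
  intro u v
  obtain ⟨l, hl⟩ := hG u v
  induction l generalizing u with
  | nil => exact ⟨[], by simp, hl⟩
  | cons a t ih =>
    obtain ⟨rfl, ht⟩ := hl
    obtain ⟨w, hwT, hw⟩ := ih _ ht
    by_cases haT : a ∈ T
    · exact ⟨a :: w, by simpa [haT] using hwT, rfl, hw⟩
    · obtain ⟨c, hc⟩ := h _ fun h => haT (G.rev_rev a ▸ hrev _ h)
      obtain ⟨w', hw'T, hw'⟩ := hc.exists_walk
      rw [G.tail_rev, G.head_rev] at hw'
      exact ⟨w' ++ w, fun f hf => (List.mem_append.1 hf).elim (hw'T f) (hwT f), hw'.append hw⟩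

theorem exists_isSpanningTree_exists_walk_inter [Finite A] (hG : G.Connected) {Z : Set A}
    (hZ : G.RevClosed Z) :
    ∃ T, G.IsSpanningTree T ∧ (∀ e ∉ T, ∃ c, G.FundCycle T e c) ∧
      ∀ e ∈ Z, e ∉ T → ∃ w, (∀ f ∈ w, f ∈ T ∧ f ∈ Z) ∧ G.IsWalkFrom w (G.tail e) (G.head e) := by
  obtain ⟨F, -, hFZ, hFrev, hFacyc, hFmax⟩ :=
    exists_maximal_isAcyclic (Set.empty_subset Z) hZ (fun _ h => h.elim) isAcyclic_empty
  obtain ⟨T, hFT, -, hTrev, hTacyc, hTmax⟩ :=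
    exists_maximal_isAcyclic (Set.subset_univ F) (fun _ _ => trivial) hFrev hFacyc
  have hfund : ∀ e ∉ T, ∃ c, G.FundCycle T e c := fun e he => hTmax e trivial he
  refine ⟨T, ⟨hTrev, spans_of_forall_fundCycle hG hTrev hfund, hTacyc⟩, hfund, fun e heZ heT => ?_⟩
  obtain ⟨w, hwF, hw⟩ := (hFmax e heZ fun h => heT (hFT h)).choose_spec.exists_walk
  exact ⟨w, fun f hf => ⟨hFT (hwF f hf), hFZ (hwF f hf)⟩, hw⟩

theorem exists_isSpanningTree_sum_map_eq_zero [Finite A] (hG : G.Connected) {b : A → Fin d → ℝ}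
    (hb : G.IsOneForm b) :
    ∃ (T : Set A) (c : A → List A), G.IsSpanningTree T ∧ (∀ e ∉ T, G.FundCycle T e (c e)) ∧
      ∀ e ∉ T, b e = 0 → ((c e).map b).sum = 0 := by
  obtain ⟨T, hT, hfund, hwalk⟩ :=
    exists_isSpanningTree_exists_walk_inter hG (Z := {e | b e = 0}) fun e (he : b e = 0) =>
      show b (G.rev e) = 0 by rw [hb e, he, neg_zero]
  choose! c hc using hfund
  refine ⟨T, c, hT, hc, fun e heT hbe => ?_⟩
  obtain ⟨θ, hθ⟩ := exists_defect_eq_zero hT.2.1 hT.2.2 hb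
  obtain ⟨w, hwTZ, hw⟩ := hwalk e hbe heT
  have hw0 : (w.map b).sum = 0 := List.sum_eq_zero <| by
    simp only [List.mem_map]
    rintro _ ⟨f, hf, rfl⟩
    exact (hwTZ f hf).2
  rw [(hc e heT).sum_map_eq_defect hθ, defect, hbe, zero_sub, neg_sub,
    ← sum_map_eq_sub_of_defect_eq_zero hθ (fun f hf => (hwTZ f hf).1) hw, hw0]

theorem mForm_eq_defect {T S : Set A} {x : A → Fin d → ℝ} (hx : G.IsOneForm x)
    (hS : G.IsOrientation T S) {c : A → List A} (hc : ∀ e ∈ S, G.FundCycle T e (c e))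
    {θ : V → Fin d → ℝ} (hθ : ∀ e ∈ T, G.defect x θ e = 0) : G.mForm x S c = G.defect x θ := by
  funext e
  unfold mForm
  split_ifs with he hre
  · exact (hc e he).sum_map_eq_defect hθ
  · rw [(hc _ hre).sum_map_eq_defect hθ, isOneForm_defect hx θ e, neg_neg]
  · have heT : e ∈ T := by_contra fun heT => he ((hS.2 e heT).2 hre)
    exact (hθ e heT).symm

theorem suppCard_defect [Fintype A] {T : Set A} {x : A → Fin d → ℝ} {θ : V → Fin d → ℝ}
    (hθ : ∀ e ∈ T, G.defect x θ e = 0) {c : A → List A} (hc : ∀ e ∉ T, G.FundCycle T e (c e)) :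
    suppCard (G.defect x θ) = badCount x T c := by
  refine congrArg Finset.card (Finset.filter_congr fun e _ => ?_)
  by_cases heT : e ∈ T
  · simp [heT, hθ e heT]
  · simp [heT, (hc e heT).sum_map_eq_defect hθ]

theorem badCount_le_suppCard [Fintype A] {T : Set A} {x b : A → Fin d → ℝ} (hb : G.InF x b)
    {c : A → List A} (hc : ∀ e ∉ T, G.FundCycle T e (c e))
    (h0 : ∀ e ∉ T, b e = 0 → ((c e).map b).sum = 0) : badCount x T c ≤ suppCard b := by
  refine Finset.card_le_card fun e => ?_
  simp only [Finset.mem_filter, Finset.mem_univ, true_and]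
  rintro ⟨heT, hxe⟩ hbe
  obtain ⟨u, hw⟩ := (hc e heT).1
  exact hxe (by rw [← hb.2 u _ hw.1, h0 e heT hbe])

end OGraph

theorem mForm_of_minTree_is_minimal_general {V A : Type} [Fintype A] {d : ℕ}
    (G : OGraph V A) (hG : G.Connected)
    (x : A → Fin d → ℝ) (hx : G.IsOneForm x)
    (T S : Set A) (c : A → List A)
    (hT : G.IsMinTree x T) (hS : G.IsOrientation T S)
    (hc : ∀ e ∈ S, G.FundCycle T e (c e)) :
    G.InF x (G.mForm x S c) ∧
    ∀ b : A → Fin d → ℝ, G.InF x b →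
      OGraph.suppCard (G.mForm x S c) ≤ OGraph.suppCard b := by
  obtain ⟨⟨-, hTspan, hTacyc⟩, c₀, hc₀, hmin⟩ := hT
  obtain ⟨θ, hθ⟩ := OGraph.exists_defect_eq_zero hTspan hTacyc hx
  rw [OGraph.mForm_eq_defect hx hS hc hθ]
  refine ⟨OGraph.inF_defect hx θ, fun b hb => ?_⟩
  obtain ⟨T', c', hT', hc', hc'b⟩ := OGraph.exists_isSpanningTree_sum_map_eq_zero hG hb.1
  calc OGraph.suppCard (G.defect x θ) = OGraph.badCount x T c₀ := OGraph.suppCard_defect hθ hc₀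
    _ ≤ OGraph.badCount x T' c' := hmin T' c' hT' hc'
    _ ≤ OGraph.suppCard b := OGraph.badCount_le_suppCard hb hc' hc'b

/-- Let `x` be a 1-form on a finite connected graph `G`. For
every `x`-minimal spanning tree `T` of `G` (with fundamental cycles `c` and an
orientation choice `S`), the 1-form `m(·,T)` is a minimal form in `F(x)`. -/
theorem mForm_of_minTree_is_minimal {V A : Type} [Fintype V] [Fintype A] {d : ℕ}
    (G : OGraph V A) (hG : G.Connected)
    (x : A → Fin d → ℝ) (hx : G.IsOneForm x)
    (T S : Set A) (c : A → List A)
    (hT : G.IsMinTree x T) (hS : G.IsOrientation T S)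
    (hc : ∀ e ∈ S, G.FundCycle T e (c e)) :
    G.InF x (G.mForm x S c) ∧
    ∀ b : A → Fin d → ℝ, G.InF x b →
      OGraph.suppCard (G.mForm x S c) ≤ OGraph.suppCard b :=
  mForm_of_minTree_is_minimal_general G hG x hx T S c hT hS hc
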